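/- Let α = 1 and β > 0, let φ be an analytic self-map of the open unit disk D, and let g be analytic on D. Then the operator V_gC_φ, defined by (V_gC_φ f)(z) = ∫₀^z f'(φ(ξ)) g(ξ) dξ, is bounded from Z^1 to Z^β if and only if sup_{z∈D} (1−|z|²)^β |g(z)φ'(z)| / (1−|φ(z)|²) < ∞ and sup_{z∈D} (1−|z|²)^β log(2/(1−|φ(z)|²)) |g'(z)| < ∞. -/

import Mathlib

noncomputable section

/-- The open unit disk in the complex plane. -/
def uD : Set ℂ := Metric.ball 0 1

/-- The Zygmund-type quantity `(1-|z|^2)^a * |f''(z)|`. -/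
def zygS (a : ℝ) (f : ℂ → ℂ) (z : ℂ) : ℝ := (1 - ‖z‖ ^ 2) ^ a * ‖deriv (deriv f) z‖

/-- Membership in the Zygmund-type space `Z^a`. -/
def memZ (a : ℝ) (f : ℂ → ℂ) : Prop :=
  AnalyticOn ℂ f uD ∧ ∃ M : ℝ, ∀ z ∈ uD, zygS a f z ≤ M

/-- The Zygmund-type norm `‖f‖_{Z^a} = |f 0| + |f' 0| + sup_{z ∈ D} (1-|z|^2)^a |f''(z)|`. -/
def zNorm (a : ℝ) (f : ℂ → ℂ) : ℝ := ‖f 0‖ + ‖deriv f 0‖ + sSup (zygS a f '' uD)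

/-- Membership in the weighted space `H^∞_{v_b}` (for `u` analytic on `uD`). -/
def memHv (b : ℝ) (u : ℂ → ℂ) : Prop :=
  ∃ M : ℝ, ∀ z ∈ uD, (1 - ‖z‖ ^ 2) ^ b * ‖u z‖ ≤ M

/-- `T` is a bounded operator from `Z^a` to `Z^b`. -/
def boundedOp (a b : ℝ) (T : (ℂ → ℂ) → ℂ → ℂ) : Prop :=
  (∀ f, memZ a f → memZ b (T f)) ∧
    ∃ C > 0, ∀ f, memZ a f → zNorm b (T f) ≤ C * zNorm a f

/-- `(V_g C_φ f)(z) = ∫₀^z f'(φ(ξ)) g(ξ) dξ`, parametrized along the segment from `0` to `z`. -/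
def VgCphi (g φ : ℂ → ℂ) (f : ℂ → ℂ) : ℂ → ℂ :=
  fun z => ∫ t in (0:ℝ)..1, z * (deriv f (φ ((t : ℂ) * z)) * g ((t : ℂ) * z))

/-!
Every `p` with `sup (1 - |z|²) |p'(z)| < ∞` is the derivative of a function of `Z¹`, its radial
primitive `z ↦ ∫₀¹ z p(tz) dt`, of norm at most `|p(0)| + sup (1 - |z|²) |p'(z)|`. Since
`(V_g C_φ f)'' = f''(φ) φ' g + f'(φ) g'`, boundedness of `V_g C_φ` tested on the primitive of
`p = (z - w)/(1 - w̄z)` with `w = φ(a)` (so `p(w) = 0`, `p'(w) = 1/(1 - |w|²)`) gives the first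
condition, and tested on the primitive of `p = log 2 - log(1 - w̄z)` (so
`p(w) = log (2/(1 - |w|²))`) gives the second one once the first is known.

Conversely, for `f ∈ Z¹` one has `|f''(w)| ≤ ‖f‖/(1 - |w|²)` and, integrating along the radius,
`|f'(w)| ≤ (1 + 1/log 2) ‖f‖ log (2/(1 - |w|²))`; inserted in the formula for `(V_g C_φ f)''`,
these bounds give boundedness.
-/

open Metric Set Filter Topology ComplexConjugate

lemma mem_uD {z : ℂ} : z ∈ uD ↔ ‖z‖ < 1 := mem_ball_zero_iff

lemma zero_mem_uD : (0 : ℂ) ∈ uD := mem_ball_self one_pos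

lemma one_sub_norm_sq_pos {z : ℂ} (hz : z ∈ uD) : 0 < 1 - ‖z‖ ^ 2 := by
  have := mem_uD.mp hz
  nlinarith [norm_nonneg z]

lemma ofReal_mul_mem_uD {z : ℂ} (hz : z ∈ uD) {t : ℝ} (ht : t ∈ Icc (0 : ℝ) 1) :
    (t : ℂ) * z ∈ uD := by
  rw [mem_uD, norm_mul, Complex.norm_real, Real.norm_of_nonneg ht.1]
  nlinarith [mem_uD.mp hz, norm_nonneg z, ht.2]

def radialPrimitive (p : ℂ → ℂ) (z : ℂ) : ℂ := ∫ t in (0 : ℝ)..1, z * p (t * z)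

lemma radialPrimitive_zero (p : ℂ → ℂ) : radialPrimitive p 0 = 0 := by
  simp [radialPrimitive]

lemma radialPrimitive_eq_sub {p F : ℂ → ℂ} (hp : ContinuousOn p uD)
    (hF : ∀ z ∈ uD, HasDerivAt F (p z) z) {z : ℂ} (hz : z ∈ uD) :
    radialPrimitive p z = F z - F 0 := by
  have hderiv : ∀ t ∈ uIcc (0 : ℝ) 1,
      HasDerivAt (fun s : ℝ => F (s * z)) (z * p (t * z)) t := by
    intro t ht
    rw [uIcc_of_le zero_le_one] at ht
    have := (hF _ (ofReal_mul_mem_uD hz ht)).comp (t : ℂ) (hasDerivAt_mul_const z)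
    simpa [mul_comm] using this.comp_ofReal
  have hint : IntervalIntegrable (fun t : ℝ => z * p (t * z)) MeasureTheory.volume 0 1 := by
    refine ContinuousOn.intervalIntegrable (continuousOn_const.mul (hp.comp (by fun_prop) ?_))
    rw [uIcc_of_le zero_le_one]
    exact fun t ht => ofReal_mul_mem_uD hz ht
  have hftc := intervalIntegral.integral_eq_sub_of_hasDerivAt hderiv hint
  simp only [Complex.ofReal_one, one_mul, Complex.ofReal_zero, zero_mul] at hftc
  exact hftc

lemma hasDerivAt_radialPrimitive {p : ℂ → ℂ} (hp : DifferentiableOn ℂ p uD) {z : ℂ}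
    (hz : z ∈ uD) : HasDerivAt (radialPrimitive p) (p z) z := by
  obtain ⟨F, hF⟩ := hp.isExactOn_ball
  have hEq : radialPrimitive p =ᶠ[𝓝 z] fun ζ => F ζ - F 0 :=
    eventually_of_mem (isOpen_ball.mem_nhds hz) fun ζ hζ =>
      radialPrimitive_eq_sub hp.continuousOn hF hζ
  exact ((hF z hz).sub_const (F 0)).congr_of_eventuallyEq hEq

lemma differentiableOn_radialPrimitive {p : ℂ → ℂ} (hp : DifferentiableOn ℂ p uD) :
    DifferentiableOn ℂ (radialPrimitive p) uD := fun _ hz =>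
  (hasDerivAt_radialPrimitive hp hz).differentiableAt.differentiableWithinAt

lemma deriv_deriv_radialPrimitive {p : ℂ → ℂ} (hp : DifferentiableOn ℂ p uD) {z : ℂ}
    (hz : z ∈ uD) : deriv (deriv (radialPrimitive p)) z = deriv p z := by
  refine EventuallyEq.deriv_eq (eventually_of_mem (isOpen_ball.mem_nhds hz) fun ζ hζ => ?_)
  exact (hasDerivAt_radialPrimitive hp hζ).deriv

lemma memZ_radialPrimitive {a M : ℝ} {p : ℂ → ℂ} (hp : DifferentiableOn ℂ p uD)
    (hM : ∀ z ∈ uD, (1 - ‖z‖ ^ 2) ^ a * ‖deriv p z‖ ≤ M) : memZ a (radialPrimitive p) := by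
  refine ⟨((differentiableOn_radialPrimitive hp).analyticOnNhd isOpen_ball).analyticOn, M,
    fun z hz => ?_⟩
  rw [zygS, deriv_deriv_radialPrimitive hp hz]
  exact hM z hz

lemma zNorm_radialPrimitive_le {a M : ℝ} {p : ℂ → ℂ} (hp : DifferentiableOn ℂ p uD)
    (hM : ∀ z ∈ uD, (1 - ‖z‖ ^ 2) ^ a * ‖deriv p z‖ ≤ M) :
    zNorm a (radialPrimitive p) ≤ ‖p 0‖ + M := by
  have hsup : sSup (zygS a (radialPrimitive p) '' uD) ≤ M := by
    refine csSup_le (Nonempty.image _ ⟨0, zero_mem_uD⟩) ?_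
    rintro _ ⟨z, hz, rfl⟩
    rw [zygS, deriv_deriv_radialPrimitive hp hz]
    exact hM z hz
  rw [zNorm, radialPrimitive_zero, norm_zero, zero_add,
    (hasDerivAt_radialPrimitive hp zero_mem_uD).deriv]
  linarith

lemma zygS_le_sSup {a : ℝ} {f : ℂ → ℂ} (hf : memZ a f) {z : ℂ} (hz : z ∈ uD) :
    zygS a f z ≤ sSup (zygS a f '' uD) := by
  obtain ⟨M, hM⟩ := hf.2
  exact le_csSup ⟨M, by rintro _ ⟨y, hy, rfl⟩; exact hM y hy⟩ (mem_image_of_mem _ hz)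

lemma zygS_le_zNorm {a : ℝ} {f : ℂ → ℂ} (hf : memZ a f) {z : ℂ} (hz : z ∈ uD) :
    zygS a f z ≤ zNorm a f := by
  have := zygS_le_sSup hf hz
  rw [zNorm]
  linarith [norm_nonneg (f 0), norm_nonneg (deriv f 0)]

lemma norm_deriv_zero_le_zNorm {a : ℝ} {f : ℂ → ℂ} (hf : memZ a f) :
    ‖deriv f 0‖ ≤ zNorm a f := by
  have h0 : 0 ≤ zygS a f 0 := by simp [zygS]
  have := zygS_le_sSup hf zero_mem_uD
  rw [zNorm]
  linarith [norm_nonneg (f 0)]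

lemma norm_deriv_deriv_mul_le_zNorm {f : ℂ → ℂ} (hf : memZ 1 f) {z : ℂ} (hz : z ∈ uD) :
    ‖deriv (deriv f) z‖ * (1 - ‖z‖ ^ 2) ≤ zNorm 1 f := by
  simpa [zygS, mul_comm] using zygS_le_zNorm hf hz

lemma norm_deriv_sub_deriv_zero_le {f : ℂ → ℂ} (hf : memZ 1 f) {w : ℂ} (hw : w ∈ uD) :
    ‖deriv f w - deriv f 0‖ ≤ zNorm 1 f * -Real.log (1 - ‖w‖) := by
  set N := zNorm 1 f
  have hw1 := mem_uD.mp hw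
  have hpos : ∀ t ∈ Icc (0 : ℝ) 1, 0 < 1 - t * ‖w‖ := fun t ht => by
    nlinarith [norm_nonneg w, ht.2]
  have hf'' : DifferentiableOn ℂ (deriv f) uD := hf.1.differentiableOn.deriv isOpen_ball
  have hderiv : ∀ t ∈ Icc (0 : ℝ) 1, HasDerivAt (fun s : ℝ => deriv f (s * w) - deriv f 0)
      (deriv (deriv f) (t * w) * w) t := fun t ht => by
    have := ((hf''.differentiableAt (isOpen_ball.mem_nhds (ofReal_mul_mem_uD hw ht))).hasDerivAt
      |>.comp (t : ℂ) (hasDerivAt_mul_const w)).comp_ofReal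
    exact this.sub_const _
  have hB : ∀ t ∈ Icc (0 : ℝ) 1, HasDerivAt (fun s => N * -Real.log (1 - s * ‖w‖))
      (N * (‖w‖ / (1 - t * ‖w‖))) t := fun t ht => by
    have := ((hasDerivAt_mul_const ‖w‖).const_sub 1).log (hpos t ht).ne'
    exact (this.neg.const_mul N).congr_deriv (by ring)
  have hbound : ∀ t ∈ Ico (0 : ℝ) 1,
      ‖deriv (deriv f) (t * w) * w‖ ≤ N * (‖w‖ / (1 - t * ‖w‖)) := fun t ht => by
    have ht' := Ico_subset_Icc_self ht
    have hN := norm_deriv_deriv_mul_le_zNorm hf (ofReal_mul_mem_uD hw ht')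
    rw [norm_mul, Complex.norm_real, Real.norm_of_nonneg ht.1] at hN
    have hsq : 1 - t * ‖w‖ ≤ 1 - (t * ‖w‖) ^ 2 := by
      have htw : t * ‖w‖ ≤ 1 := by nlinarith [ht.2, norm_nonneg w]
      nlinarith [mul_nonneg ht.1 (norm_nonneg w)]
    rw [norm_mul, mul_div_assoc', le_div_iff₀ (hpos t ht'), mul_right_comm]
    exact mul_le_mul_of_nonneg_right
      ((mul_le_mul_of_nonneg_left hsq (norm_nonneg _)).trans hN) (norm_nonneg w)
  have := image_norm_le_of_norm_deriv_right_le_deriv_boundary'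
    (fun t ht => (hderiv t ht).continuousAt.continuousWithinAt)
    (fun t ht => (hderiv t (Ico_subset_Icc_self ht)).hasDerivWithinAt)
    (by simp) (fun t ht => (hB t ht).continuousAt.continuousWithinAt)
    (fun t ht => (hB t (Ico_subset_Icc_self ht)).hasDerivWithinAt) hbound
    (right_mem_Icc.mpr zero_le_one)
  simpa using this

def logWeight (w : ℂ) : ℝ := Real.log (2 / (1 - ‖w‖ ^ 2))

lemma log_two_le_logWeight {w : ℂ} (hw : w ∈ uD) : Real.log 2 ≤ logWeight w := by
  refine Real.log_le_log two_pos (le_div_self zero_le_two (one_sub_norm_sq_pos hw) ?_)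
  nlinarith [norm_nonneg w]

lemma logWeight_pos {w : ℂ} (hw : w ∈ uD) : 0 < logWeight w :=
  (Real.log_pos one_lt_two).trans_le (log_two_le_logWeight hw)

lemma neg_log_one_sub_norm_le_logWeight {w : ℂ} (hw : w ∈ uD) :
    -Real.log (1 - ‖w‖) ≤ logWeight w := by
  have hw1 := mem_uD.mp hw
  have hpos : 0 < 1 - ‖w‖ := by linarith
  rw [← Real.log_inv]
  refine Real.log_le_log (inv_pos.mpr hpos) ?_
  rw [inv_eq_one_div, div_le_div_iff₀ hpos (one_sub_norm_sq_pos hw)]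
  nlinarith [norm_nonneg w]

lemma norm_deriv_le_logWeight {f : ℂ → ℂ} (hf : memZ 1 f) {w : ℂ} (hw : w ∈ uD) :
    ‖deriv f w‖ ≤ (1 + (Real.log 2)⁻¹) * zNorm 1 f * logWeight w := by
  set N := zNorm 1 f
  have h0 := norm_deriv_zero_le_zNorm hf
  have hN : 0 ≤ N := (norm_nonneg _).trans h0
  have hlog2 : 0 < Real.log 2 := Real.log_pos one_lt_two
  calc ‖deriv f w‖ ≤ ‖deriv f 0‖ + ‖deriv f w - deriv f 0‖ := norm_le_insert' _ _
    _ ≤ N + N * logWeight w := add_le_add h0 ((norm_deriv_sub_deriv_zero_le hf hw).trans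
        (mul_le_mul_of_nonneg_left (neg_log_one_sub_norm_le_logWeight hw) hN))
    _ ≤ N * logWeight w / Real.log 2 + N * logWeight w := by
        gcongr
        rw [le_div_iff₀ hlog2]
        exact mul_le_mul_of_nonneg_left (log_two_le_logWeight hw) hN
    _ = (1 + (Real.log 2)⁻¹) * N * logWeight w := by field_simp; ring

section Composition

variable {φ g : ℂ → ℂ} {β : ℝ}

lemma VgCphi_eq_radialPrimitive (f : ℂ → ℂ) :
    VgCphi g φ f = radialPrimitive (fun ξ => deriv f (φ ξ) * g ξ) := rfl

variable (hφ : DifferentiableOn ℂ φ uD) (hφm : MapsTo φ uD uD) (hg : DifferentiableOn ℂ g uD)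
include hφ hφm hg

lemma differentiableOn_comp_mul {p : ℂ → ℂ} (hp : DifferentiableOn ℂ p uD) :
    DifferentiableOn ℂ (fun ξ => p (φ ξ) * g ξ) uD :=
  (hp.comp hφ hφm).mul hg

lemma deriv_comp_mul {p : ℂ → ℂ} (hp : DifferentiableOn ℂ p uD) {z : ℂ} (hz : z ∈ uD) :
    deriv (fun ξ => p (φ ξ) * g ξ) z =
      deriv p (φ z) * deriv φ z * g z + p (φ z) * deriv g z := by
  have hdiff {h : ℂ → ℂ} (hh : DifferentiableOn ℂ h uD) {x : ℂ} (hx : x ∈ uD) :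
      HasDerivAt h (deriv h x) x :=
    (hh.differentiableAt (isOpen_ball.mem_nhds hx)).hasDerivAt
  exact (((hdiff hp (hφm hz)).comp z (hdiff hφ hz)).mul (hdiff hg hz)).deriv

lemma exists_test_bound_of_boundedOp (hb : boundedOp 1 β (VgCphi g φ)) :
    ∃ C ≥ 0, ∀ (p : ℂ → ℂ) (M : ℝ), DifferentiableOn ℂ p uD →
      (∀ z ∈ uD, (1 - ‖z‖ ^ 2) * ‖deriv p z‖ ≤ M) → ∀ z ∈ uD,
      (1 - ‖z‖ ^ 2) ^ β * ‖deriv p (φ z) * deriv φ z * g z + p (φ z) * deriv g z‖ ≤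
        C * (‖p 0‖ + M) := by
  obtain ⟨hmaps, C, hC, hbound⟩ := hb
  refine ⟨C, hC.le, fun p M hp hM z hz => ?_⟩
  have hM' : ∀ z ∈ uD, (1 - ‖z‖ ^ 2) ^ (1 : ℝ) * ‖deriv p z‖ ≤ M := by
    simpa only [Real.rpow_one] using hM
  set f := radialPrimitive p
  have hf : memZ 1 f := memZ_radialPrimitive hp hM'
  have hderiv_f : deriv f =ᶠ[𝓝 (φ z)] p :=
    eventually_of_mem (isOpen_ball.mem_nhds (hφm hz)) fun ζ hζ =>
      (hasDerivAt_radialPrimitive hp hζ).deriv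
  have hf' : DifferentiableOn ℂ (deriv f) uD :=
    (differentiableOn_radialPrimitive hp).deriv isOpen_ball
  calc (1 - ‖z‖ ^ 2) ^ β * ‖deriv p (φ z) * deriv φ z * g z + p (φ z) * deriv g z‖
      = zygS β (VgCphi g φ f) z := by
        rw [zygS, VgCphi_eq_radialPrimitive,
          deriv_deriv_radialPrimitive (differentiableOn_comp_mul hφ hφm hg hf') hz,
          deriv_comp_mul hφ hφm hg hf' hz, hderiv_f.deriv_eq, hderiv_f.eq_of_nhds]
    _ ≤ zNorm β (VgCphi g φ f) := zygS_le_zNorm (hmaps f hf) hz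
    _ ≤ C * zNorm 1 f := hbound f hf
    _ ≤ C * (‖p 0‖ + M) := mul_le_mul_of_nonneg_left (zNorm_radialPrimitive_le hp hM') hC.le

end Composition

section TestFunctions

variable {w z : ℂ}

lemma one_sub_norm_mul_norm_le_norm_one_sub_conj_mul (w z : ℂ) :
    1 - ‖w‖ * ‖z‖ ≤ ‖1 - conj w * z‖ := by
  simpa using norm_sub_norm_le (1 : ℂ) (conj w * z)

lemma one_sub_conj_mul_mem_slitPlane (hw : w ∈ uD) (hz : z ∈ uD) :
    1 - conj w * z ∈ Complex.slitPlane := by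
  rw [sub_eq_add_neg]
  refine Complex.mem_slitPlane_of_norm_lt_one ?_
  rw [norm_neg, norm_mul, Complex.norm_conj]
  nlinarith [mem_uD.mp hw, mem_uD.mp hz, norm_nonneg w, norm_nonneg z]

lemma one_sub_conj_mul_ne_zero (hw : w ∈ uD) (hz : z ∈ uD) : 1 - conj w * z ≠ 0 :=
  Complex.slitPlane_ne_zero (one_sub_conj_mul_mem_slitPlane hw hz)

lemma one_sub_conj_mul_self (w : ℂ) : 1 - conj w * w = ((1 - ‖w‖ ^ 2 : ℝ) : ℂ) := by
  rw [Complex.conj_mul']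
  push_cast
  ring

def mobius (w z : ℂ) : ℂ := (z - w) / (1 - conj w * z)

lemma hasDerivAt_mobius (hw : w ∈ uD) (hz : z ∈ uD) :
    HasDerivAt (mobius w) ((1 - conj w * w) / (1 - conj w * z) ^ 2) z := by
  have h := ((hasDerivAt_id z).sub_const w).div
    (((hasDerivAt_id z).const_mul (conj w)).const_sub 1) (one_sub_conj_mul_ne_zero hw hz)
  refine h.congr_deriv ?_
  simp only [id, mul_one]
  ring

lemma one_sub_norm_sq_mul_norm_deriv_mobius_le (hw : w ∈ uD) (hz : z ∈ uD) :
    (1 - ‖z‖ ^ 2) * ‖deriv (mobius w) z‖ ≤ 1 := by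
  have hne := one_sub_conj_mul_ne_zero hw hz
  have hle := one_sub_norm_mul_norm_le_norm_one_sub_conj_mul w z
  rw [(hasDerivAt_mobius hw hz).deriv, one_sub_conj_mul_self, norm_div, norm_pow,
    Complex.norm_real, Real.norm_of_nonneg (one_sub_norm_sq_pos hw).le, mul_div_assoc',
    div_le_one (by positivity)]
  have h0 : 0 ≤ 1 - ‖w‖ * ‖z‖ := by
    nlinarith [mem_uD.mp hw, mem_uD.mp hz, norm_nonneg w, norm_nonneg z]
  nlinarith [sq_nonneg (‖w‖ - ‖z‖), mul_le_mul hle hle h0 (norm_nonneg _)]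

lemma deriv_mobius_self (hw : w ∈ uD) : deriv (mobius w) w = ((1 - ‖w‖ ^ 2 : ℝ) : ℂ)⁻¹ := by
  have hne : ((1 - ‖w‖ ^ 2 : ℝ) : ℂ) ≠ 0 := by exact_mod_cast (one_sub_norm_sq_pos hw).ne'
  rw [(hasDerivAt_mobius hw hw).deriv, one_sub_conj_mul_self]
  field_simp

lemma mobius_self (w : ℂ) : mobius w w = 0 := by simp [mobius]

lemma mobius_zero (w : ℂ) : mobius w 0 = -w := by simp [mobius]

def logKernel (w z : ℂ) : ℂ := Real.log 2 - Complex.log (1 - conj w * z)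

lemma hasDerivAt_logKernel (hw : w ∈ uD) (hz : z ∈ uD) :
    HasDerivAt (logKernel w) (conj w / (1 - conj w * z)) z := by
  have h := ((Complex.hasDerivAt_log (one_sub_conj_mul_mem_slitPlane hw hz)).comp z
    (((hasDerivAt_id z).const_mul (conj w)).const_sub 1)).const_sub (Real.log 2 : ℂ)
  refine h.congr_deriv ?_
  field_simp

lemma one_sub_norm_sq_mul_norm_deriv_logKernel_le (hw : w ∈ uD) (hz : z ∈ uD) :
    (1 - ‖z‖ ^ 2) * ‖deriv (logKernel w) z‖ ≤ 2 := by
  have hle := one_sub_norm_mul_norm_le_norm_one_sub_conj_mul w z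
  have hw1 := mem_uD.mp hw
  have hz1 := mem_uD.mp hz
  have hpos : 0 < 1 - ‖w‖ * ‖z‖ := by nlinarith [norm_nonneg w, norm_nonneg z]
  rw [(hasDerivAt_logKernel hw hz).deriv, norm_div, Complex.norm_conj, mul_div_assoc',
    div_le_iff₀ (hpos.trans_le hle)]
  nlinarith [norm_nonneg w, norm_nonneg z, mul_nonneg (norm_nonneg w) (norm_nonneg z)]

lemma deriv_logKernel_self (hw : w ∈ uD) :
    deriv (logKernel w) w = conj w * ((1 - ‖w‖ ^ 2 : ℝ) : ℂ)⁻¹ := by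
  rw [(hasDerivAt_logKernel hw hw).deriv, one_sub_conj_mul_self, div_eq_mul_inv]

lemma logKernel_self (hw : w ∈ uD) : logKernel w w = logWeight w := by
  rw [logKernel, one_sub_conj_mul_self, ← Complex.ofReal_log (one_sub_norm_sq_pos hw).le,
    logWeight, Real.log_div two_ne_zero (one_sub_norm_sq_pos hw).ne']
  push_cast
  ring

lemma logKernel_zero (w : ℂ) : logKernel w 0 = Real.log 2 := by simp [logKernel]

end TestFunctions

section Characterization

variable {φ g : ℂ → ℂ} {β : ℝ}
  (hφ : DifferentiableOn ℂ φ uD) (hφm : MapsTo φ uD uD) (hg : DifferentiableOn ℂ g uD)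
include hφ hφm hg

lemma exists_bound_weighted_mul_deriv_of_boundedOp (hb : boundedOp 1 β (VgCphi g φ)) :
    ∃ M : ℝ, ∀ z ∈ uD, (1 - ‖z‖ ^ 2) ^ β * ‖g z * deriv φ z‖ / (1 - ‖φ z‖ ^ 2) ≤ M := by
  obtain ⟨C, hC, htest⟩ := exists_test_bound_of_boundedOp hφ hφm hg hb
  refine ⟨2 * C, fun z hz => ?_⟩
  have hw := hφm hz
  have h := htest (mobius (φ z)) 1
    (fun ζ hζ => (hasDerivAt_mobius hw hζ).differentiableAt.differentiableWithinAt)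
    (fun ζ hζ => one_sub_norm_sq_mul_norm_deriv_mobius_le hw hζ) z hz
  rw [deriv_mobius_self hw, mobius_self, mobius_zero, zero_mul, add_zero, norm_neg, mul_assoc,
    norm_mul, norm_inv, Complex.norm_real, Real.norm_of_nonneg (one_sub_norm_sq_pos hw).le,
    mul_comm (deriv φ z)] at h
  calc (1 - ‖z‖ ^ 2) ^ β * ‖g z * deriv φ z‖ / (1 - ‖φ z‖ ^ 2)
      = (1 - ‖z‖ ^ 2) ^ β * ((1 - ‖φ z‖ ^ 2)⁻¹ * ‖g z * deriv φ z‖) := by ring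
    _ ≤ C * (‖φ z‖ + 1) := h
    _ ≤ 2 * C := by nlinarith [mem_uD.mp hw]

lemma exists_bound_weighted_logWeight_deriv_of_boundedOp (hb : boundedOp 1 β (VgCphi g φ)) :
    ∃ M : ℝ, ∀ z ∈ uD, (1 - ‖z‖ ^ 2) ^ β * logWeight (φ z) * ‖deriv g z‖ ≤ M := by
  obtain ⟨C, hC, htest⟩ := exists_test_bound_of_boundedOp hφ hφm hg hb
  obtain ⟨M₁, hM₁⟩ := exists_bound_weighted_mul_deriv_of_boundedOp hφ hφm hg hb
  refine ⟨C * (Real.log 2 + 2) + |M₁|, fun z hz => ?_⟩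
  have hw := hφm hz
  have h := htest (logKernel (φ z)) 2
    (fun ζ hζ => (hasDerivAt_logKernel hw hζ).differentiableAt.differentiableWithinAt)
    (fun ζ hζ => one_sub_norm_sq_mul_norm_deriv_logKernel_le hw hζ) z hz
  rw [deriv_logKernel_self hw, logKernel_self hw, logKernel_zero, Complex.norm_real,
    Real.norm_of_nonneg (Real.log_pos one_lt_two).le] at h
  set A := conj (φ z) * ((1 - ‖φ z‖ ^ 2 : ℝ) : ℂ)⁻¹ * deriv φ z * g z
  have hweight : 0 ≤ (1 - ‖z‖ ^ 2) ^ β := Real.rpow_nonneg (one_sub_norm_sq_pos hz).le β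
  have hA : (1 - ‖z‖ ^ 2) ^ β * ‖A‖ ≤ |M₁| := by
    have hnorm : (1 - ‖z‖ ^ 2) ^ β * ‖A‖ =
        ‖φ z‖ * ((1 - ‖z‖ ^ 2) ^ β * ‖g z * deriv φ z‖ / (1 - ‖φ z‖ ^ 2)) := by
      simp only [A, norm_mul, Complex.norm_conj, norm_inv, Complex.norm_real,
        Real.norm_of_nonneg (one_sub_norm_sq_pos hw).le]
      ring
    rw [hnorm]
    refine (mul_le_of_le_one_left ?_ (mem_uD.mp hw).le).trans
      ((hM₁ z hz).trans (le_abs_self M₁))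
    exact div_nonneg (mul_nonneg hweight (norm_nonneg _)) (one_sub_norm_sq_pos hw).le
  have htri : ‖(logWeight (φ z) : ℂ) * deriv g z‖ ≤
      ‖A + (logWeight (φ z) : ℂ) * deriv g z‖ + ‖A‖ := by
    simpa using norm_sub_le (A + (logWeight (φ z) : ℂ) * deriv g z) A
  rw [norm_mul, Complex.norm_real, Real.norm_of_nonneg (logWeight_pos hw).le] at htri
  calc (1 - ‖z‖ ^ 2) ^ β * logWeight (φ z) * ‖deriv g z‖
      ≤ (1 - ‖z‖ ^ 2) ^ β * ‖A + (logWeight (φ z) : ℂ) * deriv g z‖ +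
          (1 - ‖z‖ ^ 2) ^ β * ‖A‖ := by
        rw [mul_assoc, ← mul_add]
        exact mul_le_mul_of_nonneg_left htri hweight
    _ ≤ C * (Real.log 2 + 2) + |M₁| := add_le_add h hA

variable {M₁ M₂ : ℝ}
  (h₁ : ∀ z ∈ uD, (1 - ‖z‖ ^ 2) ^ β * ‖g z * deriv φ z‖ / (1 - ‖φ z‖ ^ 2) ≤ M₁)
  (h₂ : ∀ z ∈ uD, (1 - ‖z‖ ^ 2) ^ β * logWeight (φ z) * ‖deriv g z‖ ≤ M₂)
include h₁ h₂

lemma weighted_norm_deriv_integrand_le {f : ℂ → ℂ} (hf : memZ 1 f) :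
    ∀ z ∈ uD, (1 - ‖z‖ ^ 2) ^ β * ‖deriv (fun ξ => deriv f (φ ξ) * g ξ) z‖ ≤
      (M₁ + (1 + (Real.log 2)⁻¹) * M₂) * zNorm 1 f := by
  intro z hz
  set N := zNorm 1 f
  set c := 1 + (Real.log 2)⁻¹
  have hw := hφm hz
  have hN : 0 ≤ N := (norm_nonneg _).trans (norm_deriv_zero_le_zNorm hf)
  have hc : 0 ≤ c := add_nonneg zero_le_one (inv_nonneg.mpr (Real.log_pos one_lt_two).le)
  have hweight : 0 ≤ (1 - ‖z‖ ^ 2) ^ β := Real.rpow_nonneg (one_sub_norm_sq_pos hz).le β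
  have hf2 : ‖deriv (deriv f) (φ z)‖ ≤ N / (1 - ‖φ z‖ ^ 2) := by
    rw [le_div_iff₀ (one_sub_norm_sq_pos hw)]
    exact norm_deriv_deriv_mul_le_zNorm hf hw
  have hf1 := norm_deriv_le_logWeight hf hw
  rw [deriv_comp_mul hφ hφm hg (hf.1.differentiableOn.deriv isOpen_ball) hz]
  calc (1 - ‖z‖ ^ 2) ^ β *
        ‖deriv (deriv f) (φ z) * deriv φ z * g z + deriv f (φ z) * deriv g z‖
      ≤ (1 - ‖z‖ ^ 2) ^ β * (‖deriv (deriv f) (φ z)‖ * ‖g z * deriv φ z‖ +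
          ‖deriv f (φ z)‖ * ‖deriv g z‖) := by
        refine mul_le_mul_of_nonneg_left ((norm_add_le _ _).trans_eq ?_) hweight
        simp only [norm_mul]
        ring
    _ ≤ (1 - ‖z‖ ^ 2) ^ β * (N / (1 - ‖φ z‖ ^ 2) * ‖g z * deriv φ z‖ +
          c * N * logWeight (φ z) * ‖deriv g z‖) := by gcongr
    _ = (1 - ‖z‖ ^ 2) ^ β * ‖g z * deriv φ z‖ / (1 - ‖φ z‖ ^ 2) * N +
          (1 - ‖z‖ ^ 2) ^ β * logWeight (φ z) * ‖deriv g z‖ * (c * N) := by ring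
    _ ≤ M₁ * N + M₂ * (c * N) := by gcongr <;> simp_all
    _ = (M₁ + c * M₂) * N := by ring

lemma boundedOp_of_bounds : boundedOp 1 β (VgCphi g φ) := by
  have h0 : φ 0 ∈ uD := hφm zero_mem_uD
  have hp (f : ℂ → ℂ) (hf : memZ 1 f) :
      DifferentiableOn ℂ (fun ξ => deriv f (φ ξ) * g ξ) uD :=
    differentiableOn_comp_mul hφ hφm hg (hf.1.differentiableOn.deriv isOpen_ball)
  have hK (f : ℂ → ℂ) (hf : memZ 1 f) := weighted_norm_deriv_integrand_le hφ hφm hg h₁ h₂ hf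
  have hC0 : 0 ≤ (1 + (Real.log 2)⁻¹) * logWeight (φ 0) * ‖g 0‖ := by
    have := (logWeight_pos h0).le
    have := Real.log_pos one_lt_two
    positivity
  simp only [boundedOp, VgCphi_eq_radialPrimitive]
  refine ⟨fun f hf => memZ_radialPrimitive (hp f hf) (hK f hf),
    (1 + (Real.log 2)⁻¹) * logWeight (φ 0) * ‖g 0‖ + |M₁ + (1 + (Real.log 2)⁻¹) * M₂| + 1,
    by positivity, fun f hf => ?_⟩
  have hN := (norm_nonneg _).trans (norm_deriv_zero_le_zNorm hf)
  have hf0 := mul_le_mul_of_nonneg_right (norm_deriv_le_logWeight hf h0) (norm_nonneg (g 0))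
  have hKN := mul_le_mul_of_nonneg_right (le_abs_self (M₁ + (1 + (Real.log 2)⁻¹) * M₂)) hN
  calc _ ≤ ‖deriv f (φ 0) * g 0‖ + (M₁ + (1 + (Real.log 2)⁻¹) * M₂) * zNorm 1 f :=
        zNorm_radialPrimitive_le (hp f hf) (hK f hf)
    _ ≤ _ := by
        rw [norm_mul]
        linarith

end Characterization

theorem stmt_1_general (β : ℝ)
    (φ g : ℂ → ℂ) (hφ : AnalyticOn ℂ φ uD) (hφm : Set.MapsTo φ uD uD)
    (hg : AnalyticOn ℂ g uD) :
    boundedOp 1 β (VgCphi g φ) ↔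
      ((∃ M : ℝ, ∀ z ∈ uD, (1 - ‖z‖ ^ 2) ^ β * ‖g z * deriv φ z‖ / (1 - ‖φ z‖ ^ 2) ^ (1:ℝ) ≤ M) ∧ (∃ M : ℝ, ∀ z ∈ uD, (1 - ‖z‖ ^ 2) ^ β * Real.log (2 / (1 - ‖φ z‖ ^ 2)) * ‖deriv g z‖ ≤ M)) := by
  have hφ' := hφ.differentiableOn
  have hg' := hg.differentiableOn
  simp only [Real.rpow_one]
  exact ⟨fun hb => ⟨exists_bound_weighted_mul_deriv_of_boundedOp hφ' hφm hg' hb,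
      exists_bound_weighted_logWeight_deriv_of_boundedOp hφ' hφm hg' hb⟩,
    fun ⟨⟨_, h₁⟩, ⟨_, h₂⟩⟩ => boundedOp_of_bounds hφ' hφm hg' h₁ h₂⟩

theorem stmt_1 (α β : ℝ) (hα : α = 1) (hβ : 0 < β)
    (φ g : ℂ → ℂ) (hφ : AnalyticOn ℂ φ uD) (hφm : Set.MapsTo φ uD uD)
    (hg : AnalyticOn ℂ g uD) :
    boundedOp 1 β (VgCphi g φ) ↔
      ((∃ M : ℝ, ∀ z ∈ uD, (1 - ‖z‖ ^ 2) ^ β * ‖g z * deriv φ z‖ / (1 - ‖φ z‖ ^ 2) ^ (1:ℝ) ≤ M) ∧ (∃ M : ℝ, ∀ z ∈ uD, (1 - ‖z‖ ^ 2) ^ β * Real.log (2 / (1 - ‖φ z‖ ^ 2)) * ‖deriv g z‖ ≤ M)) :=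
  stmt_1_general β φ g hφ hφm hg
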